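/- For complex numbers z, w with |z|² + |w|² = 1 and w² + √2 iw + 1 ≠ 0, the map with components f₁ = 2^(1/4)(zw − iz)/(w² + √2 iw + 1), f₂ = (w² − √2 iw + 1)/(w² + √2 iw + 1), f₃ = 2^(1/4)(zw + iz)/(w² + √2 iw + 1) satisfies |f₁|² + |f₂|² − |f₃|² = 1. -/

import Mathlib

/-!
With `c = (2 ^ (1/4))² = √2`, clearing the common denominator turns the claim into
`c |zw - iz|² + |w² - ciw + 1|² - c |zw + iz|² = |w² + ciw + 1|²`, which holds for every real `c`.
By `|a - b|² - |a + b|² = -4 Re (a b̄)` the two differences are `-4 |z|² Im w` and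
`4c Im w (1 - |w|²)`, so the left side minus the right side is `4c Im w (1 - |z|² - |w|²) = 0`.
-/

open Complex ComplexConjugate

theorem Complex.norm_sub_sq_sub_norm_add_sq (a b : ℂ) :
    ‖a - b‖ ^ 2 - ‖a + b‖ ^ 2 = -4 * (a * conj b).re := by
  rw [Complex.sq_norm, Complex.sq_norm, Complex.normSq_sub, Complex.normSq_add]
  ring

theorem norm_sq_hyperquadric_of_norm_sq_add_norm_sq_eq_one (c : ℝ) {z w : ℂ}
    (h : ‖z‖ ^ 2 + ‖w‖ ^ 2 = 1) :
    c * ‖z * w - I * z‖ ^ 2 + ‖w ^ 2 - c * I * w + 1‖ ^ 2 - c * ‖z * w + I * z‖ ^ 2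
      = ‖w ^ 2 + c * I * w + 1‖ ^ 2 := by
  have hz : ‖z * w - I * z‖ ^ 2 - ‖z * w + I * z‖ ^ 2 = -4 * ‖z‖ ^ 2 * w.im := by
    rw [Complex.norm_sub_sq_sub_norm_add_sq, Complex.sq_norm, Complex.normSq_apply]
    simp only [map_mul, conj_I, mul_re, mul_im, conj_re, conj_im, neg_re, neg_im, I_re, I_im]
    ring
  have hw : ‖w ^ 2 - c * I * w + 1‖ ^ 2 - ‖w ^ 2 + c * I * w + 1‖ ^ 2
      = 4 * c * w.im * (1 - ‖w‖ ^ 2) := by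
    rw [sub_add_eq_add_sub, add_right_comm (w ^ 2), Complex.norm_sub_sq_sub_norm_add_sq,
      Complex.sq_norm, Complex.normSq_apply]
    simp only [map_mul, conj_I, conj_ofReal, mul_re, mul_im, conj_re, conj_im, neg_re, neg_im,
      I_re, I_im, ofReal_re, ofReal_im, add_re, add_im, one_re, one_im, pow_two]
    ring
  linear_combination c * hz + hw - 4 * c * w.im * h

theorem Real.two_rpow_one_fourth_sq : ((2 : ℝ) ^ ((1 : ℝ) / 4)) ^ 2 = Real.sqrt 2 := by
  rw [← Real.rpow_natCast, ← Real.rpow_mul zero_le_two, Real.sqrt_eq_rpow]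
  norm_num

theorem stmt_16 (z w : ℂ) (h : ‖z‖ ^ 2 + ‖w‖ ^ 2 = 1)
    (hden : w ^ 2 + (Real.sqrt 2 : ℂ) * Complex.I * w + 1 ≠ 0) :
    ‖(((2 : ℝ) ^ ((1 : ℝ) / 4) : ℝ) : ℂ) * (z * w - Complex.I * z)
        / (w ^ 2 + (Real.sqrt 2 : ℂ) * Complex.I * w + 1)‖ ^ 2
      + ‖(w ^ 2 - (Real.sqrt 2 : ℂ) * Complex.I * w + 1)
        / (w ^ 2 + (Real.sqrt 2 : ℂ) * Complex.I * w + 1)‖ ^ 2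
      - ‖(((2 : ℝ) ^ ((1 : ℝ) / 4) : ℝ) : ℂ) * (z * w + Complex.I * z)
        / (w ^ 2 + (Real.sqrt 2 : ℂ) * Complex.I * w + 1)‖ ^ 2 = 1 := by
  have hden' : ‖w ^ 2 + (Real.sqrt 2 : ℂ) * I * w + 1‖ ^ 2 ≠ 0 :=
    pow_ne_zero 2 (norm_ne_zero_iff.mpr hden)
  simp only [norm_div, norm_mul, norm_real, div_pow, mul_pow, Real.norm_eq_abs, sq_abs,
    Real.two_rpow_one_fourth_sq]
  rw [← add_div, div_sub_div_same, norm_sq_hyperquadric_of_norm_sq_add_norm_sq_eq_one _ h,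
    div_self hden']
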